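/- One-step identity for natural gradient: let K ∈ S with value matrix X, N = RK − Bᵀ X A_K, and let K' = K − η·2N for a stepsize η > 0 such that K' ∈ S with value matrix X'. Then X − X' satisfies X − X' = A_{K'}ᵀ(X − X')A_{K'} + 4η Nᵀ N − 4η² Nᵀ(R + Bᵀ X B)N, and in particular if η ≤ 1/(2λₙ(R + Bᵀ X B)) and R + Bᵀ X B ⪰ 0 then X ⪰ X'. -/

import Mathlib

/-!
Write `Δ = K' - K` and `N = RK - BᵀXA_K`. Expanding the Lyapunov equation of `K` at the gain `K'`
gives the difference formula `X - X' = A_{K'}ᵀ(X - X')A_{K'} - ΔᵀN - NᵀΔ - Δᵀ(R + BᵀXB)Δ`, and for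
`Δ = -2ηN` the last three terms equal `Nᵀ(4η(1 - η(R + BᵀXB)))N`, which is positive semidefinite
as soon as `η λ_max(R + BᵀXB) ≤ 1`. Finally a Stein equation `D = A'ᵀDA' + M` with `M ⪰ 0` forces
`D ⪰ 0` when `A'ᵏ → 0`: iterating it gives `D ⪰ (A'ᵏ)ᵀDA'ᵏ → 0`. Schur stability gives `A'ᵏ → 0`
through Gelfand's formula.
-/

open Matrix Filter Topology
open scoped ENNReal

/-- Spectral radius of a real square matrix, computed over ℂ. -/
noncomputable def specRad {n : ℕ} (A : Matrix (Fin n) (Fin n) ℝ) : ℝ≥0∞ :=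
  spectralRadius ℂ (A.map Complex.ofReal)

/-- A real square matrix is Schur stable if its spectral radius is `< 1`. -/
def IsSchur {n : ℕ} (A : Matrix (Fin n) (Fin n) ℝ) : Prop := specRad A < 1

theorem tendsto_pow_atTop_nhds_zero_of_spectralRadius_lt_one {A : Type*} [NormedRing A]
    [NormedAlgebra ℂ A] [CompleteSpace A] {a : A} (h : spectralRadius ℂ a < 1) :
    Tendsto (fun k : ℕ => a ^ k) atTop (𝓝 0) := by
  obtain ⟨r, hρr, hr1⟩ := ENNReal.lt_iff_exists_nnreal_btwn.mp h
  have hgelfand := spectrum.pow_nnnorm_pow_one_div_tendsto_nhds_spectralRadius a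
  have hbound : ∀ᶠ k : ℕ in atTop, ‖a ^ k‖₊ ≤ r ^ k := by
    filter_upwards [hgelfand.eventually_lt_const hρr, eventually_ge_atTop 1] with k hk hk1
    rw [one_div, ENNReal.rpow_inv_lt_iff (by positivity), ENNReal.rpow_natCast] at hk
    exact_mod_cast hk.le
  rw [tendsto_zero_iff_norm_tendsto_zero]
  exact squeeze_zero' (.of_forall fun k => norm_nonneg _)
    (by simpa [← NNReal.coe_le_coe] using hbound)
    (tendsto_pow_atTop_nhds_zero_of_lt_one r.coe_nonneg (by exact_mod_cast hr1))

open scoped ComplexOrder MatrixOrder in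
theorem Matrix.IsHermitian.posSemidef_iSup_eigenvalues_smul_one_sub {𝕜 ι : Type*} [RCLike 𝕜]
    [Fintype ι] [DecidableEq ι] {P : Matrix ι ι 𝕜} (hP : P.IsHermitian) :
    ((⨆ i, hP.eigenvalues i) • 1 - P).PosSemidef := by
  rw [← Matrix.le_iff, ← Algebra.algebraMap_eq_smul_one]
  refine (le_algebraMap_iff_spectrum_le hP.isSelfAdjoint).mpr ?_
  rw [hP.spectrum_real_eq_range_eigenvalues]
  rintro _ ⟨i, rfl⟩
  exact le_ciSup (Set.finite_range _).bddAbove i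

theorem IsSchur.tendsto_pow_atTop_nhds_zero {n : ℕ} {A : Matrix (Fin n) (Fin n) ℝ}
    (hA : IsSchur A) : Tendsto (fun k : ℕ => A ^ k) atTop (𝓝 0) := by
  let := Matrix.linftyOpNormedRing (n := Fin n) (α := ℂ)
  let := Matrix.linftyOpNormedAlgebra (n := Fin n) (R := ℂ) (α := ℂ)
  have hpow (k : ℕ) : A.map Complex.ofReal ^ k = (A ^ k).map Complex.ofReal :=
    (map_pow Complex.ofRealHom.mapMatrix A k).symm
  have hC := tendsto_pow_atTop_nhds_zero_of_spectralRadius_lt_one (a := A.map Complex.ofReal) hA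
  have hre := ((continuous_id.matrix_map Complex.continuous_re).tendsto 0).comp hC
  simpa [Function.comp_def, hpow] using hre

theorem Matrix.posSemidef_of_eq_transpose_mul_mul_add {ι : Type*} [Fintype ι] [DecidableEq ι]
    {A D M : Matrix ι ι ℝ} (hA : Tendsto (fun k : ℕ => A ^ k) atTop (𝓝 0))
    (hD : D.IsHermitian) (hM : M.PosSemidef) (h : D = Aᵀ * D * A + M) : D.PosSemidef := by
  have hk : ∀ k : ℕ, (D - (A ^ k)ᵀ * D * A ^ k).PosSemidef := by
    intro k
    induction k with
    | zero => simpa using PosSemidef.zero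
    | succ k ih =>
      have : D - (A ^ (k + 1))ᵀ * D * A ^ (k + 1)
          = M + Aᵀ * (D - (A ^ k)ᵀ * D * A ^ k) * A := by
        conv_lhs => enter [1]; rw [h]
        simp only [pow_succ, transpose_mul, Matrix.mul_sub, Matrix.sub_mul, Matrix.mul_assoc]
        abel
      rw [this]
      simpa using hM.add (ih.conjTranspose_mul_mul_same A)
  have hlim : Tendsto (fun k : ℕ => D - (A ^ k)ᵀ * D * A ^ k) atTop (𝓝 D) := by
    have hc : Continuous fun S : Matrix ι ι ℝ => D - Sᵀ * D * S :=
      continuous_const.sub ((continuous_id.matrix_transpose.matrix_mul continuous_const).matrix_mul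
        continuous_id)
    simpa only [Function.comp_def, transpose_zero, Matrix.zero_mul, Matrix.mul_zero, sub_zero]
      using (hc.tendsto 0).comp hA
  refine .of_dotProduct_mulVec_nonneg hD fun x => ?_
  have hq : Continuous fun S : Matrix ι ι ℝ => star x ⬝ᵥ S *ᵥ x :=
    continuous_const.dotProduct (continuous_id.matrix_mulVec continuous_const)
  exact ge_of_tendsto' ((hq.tendsto D).comp hlim) fun k => (hk k).dotProduct_mulVec_nonneg x

section
variable {ι κ : Type*} [Fintype ι] [Fintype κ] {A : Matrix ι ι ℝ} {B : Matrix ι κ ℝ}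
  {Q : Matrix ι ι ℝ} {R : Matrix κ κ ℝ} {K K' : Matrix κ ι ℝ} {X X' : Matrix ι ι ℝ}

theorem lyapunov_add_gain_eq (hR : Rᵀ = R) (hX : Xᵀ = X)
    (hLyap : (A - B * K)ᵀ * X * (A - B * K) + Q + Kᵀ * R * K = X) (Δ : Matrix κ ι ℝ) :
    (A - B * (K + Δ))ᵀ * X * (A - B * (K + Δ)) + Q + (K + Δ)ᵀ * R * (K + Δ)
      = X + Δᵀ * (R * K - Bᵀ * X * (A - B * K)) + (R * K - Bᵀ * X * (A - B * K))ᵀ * Δ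
        + Δᵀ * (R + Bᵀ * X * B) * Δ := by
  rw [eq_sub_of_add_eq' (eq_sub_of_add_eq hLyap)]
  simp only [transpose_add, transpose_sub, transpose_mul, transpose_transpose, hX, hR,
    Matrix.mul_add, Matrix.add_mul, Matrix.mul_sub, Matrix.sub_mul, Matrix.mul_assoc]
  abel

theorem lyapunov_solution_sub_eq (hR : Rᵀ = R) (hX : Xᵀ = X)
    (hLyap : (A - B * K)ᵀ * X * (A - B * K) + Q + Kᵀ * R * K = X)
    (hLyap' : (A - B * K')ᵀ * X' * (A - B * K') + Q + K'ᵀ * R * K' = X') :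
    X - X' = (A - B * K')ᵀ * (X - X') * (A - B * K')
      - (K' - K)ᵀ * (R * K - Bᵀ * X * (A - B * K)) - (R * K - Bᵀ * X * (A - B * K))ᵀ * (K' - K)
      - (K' - K)ᵀ * (R + Bᵀ * X * B) * (K' - K) := by
  have hexp := lyapunov_add_gain_eq hR hX hLyap (K' - K)
  rw [add_sub_cancel] at hexp
  rw [Matrix.mul_sub _ X X', Matrix.sub_mul _ _ (A - B * K'),
    eq_sub_of_add_eq (eq_sub_of_add_eq hexp), eq_sub_of_add_eq (eq_sub_of_add_eq hLyap')]
  abel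
end

theorem Matrix.posSemidef_one_sub_smul {κ : Type*} [Fintype κ] [DecidableEq κ]
    {P : Matrix κ κ ℝ} {c η : ℝ} (hP : (c • 1 - P).PosSemidef) (hη : 0 ≤ η) (hηc : η * c ≤ 1) :
    (1 - η • P).PosSemidef := by
  have h : 1 - η • P = (1 - η * c) • (1 : Matrix κ κ ℝ) + η • (c • 1 - P) := by module
  rw [h]
  exact (PosSemidef.one.smul (sub_nonneg.mpr hηc)).add (hP.smul hη)

theorem stmt14_general {n m : ℕ} (A : Matrix (Fin n) (Fin n) ℝ) (B : Matrix (Fin n) (Fin m) ℝ)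
    (Q : Matrix (Fin n) (Fin n) ℝ) (R : Matrix (Fin m) (Fin m) ℝ)
    (hR : Rᵀ = R)
    (K : Matrix (Fin m) (Fin n) ℝ) (X : Matrix (Fin n) (Fin n) ℝ)
    (hX : Xᵀ = X)
    (hLyap : (A - B * K)ᵀ * X * (A - B * K) + Q + Kᵀ * R * K = X)
    (N : Matrix (Fin m) (Fin n) ℝ) (hN : N = R * K - Bᵀ * X * (A - B * K))
    (η : ℝ) (hη : 0 < η)
    (K' : Matrix (Fin m) (Fin n) ℝ) (hK' : K' = K - (2 * η) • N)
    (X' : Matrix (Fin n) (Fin n) ℝ)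
    (hX' : X'ᵀ = X') (hS' : IsSchur (A - B * K'))
    (hLyap' : (A - B * K')ᵀ * X' * (A - B * K') + Q + K'ᵀ * R * K' = X')
    (hP : (R + Bᵀ * X * B).IsHermitian) :
    X - X' = (A - B * K')ᵀ * (X - X') * (A - B * K')
        + (4 * η) • (Nᵀ * N) - (4 * η ^ 2) • (Nᵀ * (R + Bᵀ * X * B) * N) ∧
    (η ≤ 1 / (2 * ⨆ i, hP.eigenvalues i) → (R + Bᵀ * X * B).PosSemidef →
      (X - X').PosSemidef) := by
  have hid : X - X' = (A - B * K')ᵀ * (X - X') * (A - B * K')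
      + (4 * η) • (Nᵀ * N) - (4 * η ^ 2) • (Nᵀ * (R + Bᵀ * X * B) * N) := by
    refine (lyapunov_solution_sub_eq hR hX hLyap hLyap').trans ?_
    rw [← hN, hK', sub_sub_cancel_left]
    simp only [transpose_neg, transpose_smul, Matrix.neg_mul, Matrix.mul_neg, Matrix.smul_mul,
      Matrix.mul_smul]
    module
  refine ⟨hid, fun hstep _ => ?_⟩
  set c := ⨆ i, hP.eigenvalues i
  have hc : 0 < c := by
    have := one_div_pos.mp (hη.trans_le hstep)
    linarith
  have hηc : η * c ≤ 1 := by
    have := (le_div_iff₀ (by positivity)).mp hstep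
    linarith
  have hM : ((4 * η) • (Nᵀ * N) - (4 * η ^ 2) • (Nᵀ * (R + Bᵀ * X * B) * N)).PosSemidef := by
    have := ((posSemidef_one_sub_smul hP.posSemidef_iSup_eigenvalues_smul_one_sub hη.le hηc).smul
      (by positivity : 0 ≤ 4 * η)).conjTranspose_mul_mul_same N
    convert this using 1
    simp only [conjTranspose_eq_transpose_of_trivial, Matrix.mul_smul, Matrix.smul_mul,
      Matrix.mul_sub, Matrix.sub_mul, Matrix.mul_one, smul_sub, smul_smul]
    module
  have hD : (X - X').IsHermitian := by
    rw [IsHermitian, conjTranspose_eq_transpose_of_trivial, transpose_sub, hX, hX']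
  exact posSemidef_of_eq_transpose_mul_mul_add hS'.tendsto_pow_atTop_nhds_zero hD hM
    (hid.trans (add_sub_assoc _ _ _))

/-- One-step identity for the natural gradient update
`K' = K − η·2N`, `N = RK − BᵀXA_K`; and monotonicity `X ⪰ X'` for the stepsize
`η ≤ 1/(2λₙ(R + BᵀXB))` when `R + BᵀXB ⪰ 0`. -/
theorem stmt14 {n m : ℕ} (A : Matrix (Fin n) (Fin n) ℝ) (B : Matrix (Fin n) (Fin m) ℝ)
    (Q : Matrix (Fin n) (Fin n) ℝ) (R : Matrix (Fin m) (Fin m) ℝ)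
    (hQ : Qᵀ = Q) (hR : Rᵀ = R)
    (K : Matrix (Fin m) (Fin n) ℝ) (X : Matrix (Fin n) (Fin n) ℝ)
    (hX : Xᵀ = X) (hS : IsSchur (A - B * K))
    (hLyap : (A - B * K)ᵀ * X * (A - B * K) + Q + Kᵀ * R * K = X)
    (N : Matrix (Fin m) (Fin n) ℝ) (hN : N = R * K - Bᵀ * X * (A - B * K))
    (η : ℝ) (hη : 0 < η)
    (K' : Matrix (Fin m) (Fin n) ℝ) (hK' : K' = K - (2 * η) • N)
    (X' : Matrix (Fin n) (Fin n) ℝ)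
    (hX' : X'ᵀ = X') (hS' : IsSchur (A - B * K'))
    (hLyap' : (A - B * K')ᵀ * X' * (A - B * K') + Q + K'ᵀ * R * K' = X')
    (hP : (R + Bᵀ * X * B).IsHermitian) :
    X - X' = (A - B * K')ᵀ * (X - X') * (A - B * K')
        + (4 * η) • (Nᵀ * N) - (4 * η ^ 2) • (Nᵀ * (R + Bᵀ * X * B) * N) ∧
    (η ≤ 1 / (2 * ⨆ i, hP.eigenvalues i) → (R + Bᵀ * X * B).PosSemidef →
      (X - X').PosSemidef) :=
  stmt14_general A B Q R hR K X hX hLyap N hN η hη K' hK' X' hX' hS' hLyap' hP
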